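/- Let G be a group, fix g₁, …, g_n ∈ G, and for a tuple (v₁, …, v_n, A₁, B₁, …, A_g, B_g) ∈ G^(n+2g) set u_ν = v_ν g_ν v_ν⁻¹. Fix 1 ≤ ν ≤ n and 1 ≤ i ≤ g, and set u_κ = B_i u_ν. For g ∈ G define ρ(g) : v_ν ↦ g v_ν; v_τ ↦ [g, u_ν] v_τ for τ > ν; v_τ unchanged for τ < ν; A_j ↦ [g,u_ν] A_j [g,u_ν]⁻¹ and B_j ↦ [g,u_ν] B_j [g,u_ν]⁻¹ for j < i; A_i ↦ g A_i [g, u_ν]⁻¹; B_i ↦ g B_i g⁻¹; and A_j ↦ [g, u_κ] A_j [g, u_κ]⁻¹, B_j ↦ [g, u_κ] B_j [g, u_κ]⁻¹ for j > i, where u_ν, u_κ are computed from the argument tuple and [x,y] = x y x⁻¹ y⁻¹. Then ρ is a left action of G on G^(n+2g), and u_κ is conjugation-equivariant: u_κ evaluated on ρ(g) of a tuple equals g · u_κ · g⁻¹ evaluated on that tuple. -/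

import Mathlib

/-!
The action moves `u_ν` and `u_κ = B_i u_ν` by conjugation. Hence the commutator twists of
`ρ(g₁)` and `ρ(g₂)` combine into that of `ρ(g₁ g₂)` through the cocycle identity
`[g₁ g₂, u] = [g₁, g₂ u g₂⁻¹] [g₂, u]`, and `A_i ↦ g A_i [g, u_ν]⁻¹` is compatible with it.
-/

def gcomm {G : Type*} [Group G] (x y : G) : G := x * y * x⁻¹ * y⁻¹

section

variable {G : Type*} [Group G]

theorem gcomm_one_left (y : G) : gcomm 1 y = 1 := by
  simp [gcomm]

theorem gcomm_mul_left (g₁ g₂ y : G) :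
    gcomm (g₁ * g₂) y = gcomm g₁ (g₂ * y * g₂⁻¹) * gcomm g₂ y := by
  simp only [gcomm]
  group

variable {n m : ℕ} (gg : Fin n → G) (ν : Fin n) (i : Fin m)

def punctureHolonomy (v : Fin n → G) (τ : Fin n) : G := v τ * gg τ * (v τ)⁻¹

def kappaHolonomy (q : (Fin n → G) × (Fin m → G) × (Fin m → G)) : G :=
  q.2.2 i * punctureHolonomy gg q.1 ν

/-- The paper's `ρ̃_{κ_{ν,n+2i}}` on `q = (v, A, B)`, with `c = [g, u_ν]` and `d = [g, u_κ]`. -/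
def kappaAction (g : G) (q : (Fin n → G) × (Fin m → G) × (Fin m → G)) :
    (Fin n → G) × (Fin m → G) × (Fin m → G) :=
  let c := gcomm g (punctureHolonomy gg q.1 ν)
  let d := gcomm g (kappaHolonomy gg ν i q)
  (fun τ => if τ = ν then g * q.1 τ else if ν < τ then c * q.1 τ else q.1 τ,
   fun j => if j < i then c * q.2.1 j * c⁻¹ else if j = i then g * q.2.1 j * c⁻¹
     else d * q.2.1 j * d⁻¹,
   fun j => if j < i then c * q.2.2 j * c⁻¹ else if j = i then g * q.2.2 j * g⁻¹
     else d * q.2.2 j * d⁻¹)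

theorem punctureHolonomy_kappaAction (g : G) (q : (Fin n → G) × (Fin m → G) × (Fin m → G)) :
    punctureHolonomy gg (kappaAction gg ν i g q).1 ν = g * punctureHolonomy gg q.1 ν * g⁻¹ := by
  simp only [punctureHolonomy, kappaAction, if_pos]
  group

theorem kappaHolonomy_kappaAction (g : G) (q : (Fin n → G) × (Fin m → G) × (Fin m → G)) :
    kappaHolonomy gg ν i (kappaAction gg ν i g q) = g * kappaHolonomy gg ν i q * g⁻¹ := by
  rw [kappaHolonomy, punctureHolonomy_kappaAction, kappaHolonomy]
  simp only [kappaAction, lt_irrefl, if_false, if_true]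
  group

theorem kappaAction_one (q : (Fin n → G) × (Fin m → G) × (Fin m → G)) :
    kappaAction gg ν i 1 q = q := by
  simp [kappaAction, gcomm_one_left]

theorem kappaAction_mul (g₁ g₂ : G) (q : (Fin n → G) × (Fin m → G) × (Fin m → G)) :
    kappaAction gg ν i (g₁ * g₂) q = kappaAction gg ν i g₁ (kappaAction gg ν i g₂ q) := by
  conv_rhs => rw [kappaAction, punctureHolonomy_kappaAction, kappaHolonomy_kappaAction]
  simp only [kappaAction, gcomm_mul_left, Prod.mk.injEq]
  refine ⟨funext fun τ => ?_, funext fun j => ?_, funext fun j => ?_⟩ <;> split_ifs <;> group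

end

/-- The lifted `G`-action associated to the curve `κ_{ν,n+2i} = b_i m_ν`: with
`u_τ = v_τ g_τ v_τ⁻¹` and `u_κ = B_i u_ν`, the map `ρ(g)` sending `v_ν ↦ g v_ν`,
`v_τ ↦ [g,u_ν] v_τ` for `τ > ν`, fixing `v_τ` for `τ < ν`, conjugating `A_j, B_j` by
`[g,u_ν]` for `j < i`, sending `A_i ↦ g A_i [g,u_ν]⁻¹`, `B_i ↦ g B_i g⁻¹`, and
conjugating `A_j, B_j` by `[g,u_κ]` for `j > i`, is a left action of `G` on
`G^(n+2g)`, and `u_κ` is conjugation-equivariant. -/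
theorem lifted_action_for_curve_kappa_nu_b {G : Type*} [Group G] {n m : ℕ}
    (gg : Fin n → G) (ν : Fin n) (i : Fin m)
    (u : (Fin n → G) → Fin n → G)
    (hu : ∀ v τ, u v τ = v τ * gg τ * (v τ)⁻¹)
    (uκ : ((Fin n → G) × (Fin m → G) × (Fin m → G)) → G)
    (huκ : ∀ (v : Fin n → G) (A B : Fin m → G), uκ (v, A, B) = B i * u v ν)
    (ρ : G → ((Fin n → G) × (Fin m → G) × (Fin m → G)) →
          ((Fin n → G) × (Fin m → G) × (Fin m → G)))
    (hρ : ∀ (g : G) (v : Fin n → G) (A B : Fin m → G),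
      ρ g (v, A, B) =
        (fun τ =>
          if τ = ν then g * v τ
          else if ν < τ then gcomm g (u v ν) * v τ
          else v τ,
         fun j =>
          if j < i then gcomm g (u v ν) * A j * (gcomm g (u v ν))⁻¹
          else if j = i then g * A j * (gcomm g (u v ν))⁻¹
          else gcomm g (uκ (v, A, B)) * A j * (gcomm g (uκ (v, A, B)))⁻¹,
         fun j =>
          if j < i then gcomm g (u v ν) * B j * (gcomm g (u v ν))⁻¹
          else if j = i then g * B j * g⁻¹
          else gcomm g (uκ (v, A, B)) * B j * (gcomm g (uκ (v, A, B)))⁻¹)) :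
    (∀ q, ρ 1 q = q) ∧ (∀ g₁ g₂ q, ρ (g₁ * g₂) q = ρ g₁ (ρ g₂ q)) ∧
    (∀ (g : G) (q : (Fin n → G) × (Fin m → G) × (Fin m → G)),
      uκ (ρ g q) = g * uκ q * g⁻¹) := by
  obtain rfl : u = punctureHolonomy gg := funext fun v => funext (hu v)
  obtain rfl : uκ = kappaHolonomy gg ν i := funext fun ⟨v, A, B⟩ => huκ v A B
  obtain rfl : ρ = kappaAction gg ν i := funext fun g => funext fun ⟨v, A, B⟩ => hρ g v A B
  exact ⟨kappaAction_one gg ν i, kappaAction_mul gg ν i, kappaHolonomy_kappaAction gg ν i⟩
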